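/- arXiv:1104.4593 — 3 statements merged into one kernel-verified Lean document; each statement's English description precedes it below -/
import Mathlib

section
/- There exists a unique formal power series A(x) = x + a_2 x^2 + a_3 x^3 + ... with a_1 = 1 (i.e., A(x) ≡ x mod x^2) such that A(A(x)) = (A(x) - x)/x. -/
/-!
Comparing coefficients of `x^(m+2)` turns `x·A(A(x)) = A(x) - x` into
`a_(m+2) = [x^(m+1)] A(A(x))`, and `[x^(m+1)] A(A(x))` only involves `a_0, …, a_(m+1)`.
So once `a_0 = 0` and `a_1 = 1` are fixed, the equation is a recursion that determines
every coefficient; conversely, defining the coefficients by that recursion gives a solution.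
-/

/-- Composition `f ∘ g` (i.e. `f(g(x))`) of formal power series, valid when `g`
has zero constant term. -/
noncomputable def psComp {R : Type*} [CommSemiring R] (f g : PowerSeries R) : PowerSeries R :=
  PowerSeries.mk fun n =>
    ∑ k ∈ Finset.range (n + 1), PowerSeries.coeff k f * PowerSeries.coeff n (g ^ k)

open PowerSeries

namespace PowerSeries

variable {R : Type*}

section CommSemiring

variable [CommSemiring R]

theorem trunc_eq_trunc_iff {f g : R⟦X⟧} {n : ℕ} :
    trunc n f = trunc n g ↔ ∀ m < n, coeff m f = coeff m g := by
  refine ⟨fun h m hm => ?_, fun h => Polynomial.ext fun m => ?_⟩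
  · simpa [coeff_trunc, hm] using congr(Polynomial.coeff $h m)
  · simp only [coeff_trunc]
    split_ifs with hm
    exacts [h m hm, rfl]

theorem trunc_pow_eq_trunc_pow {f g : R⟦X⟧} {n : ℕ} (h : trunc n f = trunc n g) (k : ℕ) :
    trunc n (f ^ k) = trunc n (g ^ k) := by
  rw [← trunc_trunc_pow, h, trunc_trunc_pow]

@[simp]
theorem coeff_psComp (f g : R⟦X⟧) (n : ℕ) :
    coeff n (psComp f g) = ∑ k ∈ Finset.range (n + 1), coeff k f * coeff n (g ^ k) :=
  coeff_mk _ _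

theorem coeff_psComp_eq_of_trunc_eq {f f' g g' : R⟦X⟧} {n : ℕ}
    (hf : trunc (n + 1) f = trunc (n + 1) f') (hg : trunc (n + 1) g = trunc (n + 1) g') :
    coeff n (psComp f g) = coeff n (psComp f' g') := by
  simp only [coeff_psComp]
  refine Finset.sum_congr rfl fun k hk => ?_
  rw [trunc_eq_trunc_iff.mp hf k (Finset.mem_range.mp hk),
    trunc_eq_trunc_iff.mp (trunc_pow_eq_trunc_pow hg k) n n.lt_succ_self]

theorem eq_of_coeff_add_two_eq_coeff_psComp_self {A B : R⟦X⟧}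
    (h₀ : constantCoeff A = constantCoeff B) (h₁ : coeff 1 A = coeff 1 B)
    (hA : ∀ m, coeff (m + 2) A = coeff (m + 1) (psComp A A))
    (hB : ∀ m, coeff (m + 2) B = coeff (m + 1) (psComp B B)) : A = B := by
  ext n
  induction n using Nat.strong_induction_on with
  | _ n ih =>
    match n with
    | 0 => simpa using h₀
    | 1 => exact h₁
    | m + 2 =>
      have htrunc : trunc (m + 2) A = trunc (m + 2) B := trunc_eq_trunc_iff.mpr ih
      rw [hA, hB, coeff_psComp_eq_of_trunc_eq htrunc htrunc]

end CommSemiring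

theorem X_mul_psComp_self_eq_sub_X_iff [CommRing R] {A : R⟦X⟧}
    (h₀ : constantCoeff A = 0) (h₁ : coeff 1 A = 1) :
    X * psComp A A = A - X ↔ ∀ m, coeff (m + 2) A = coeff (m + 1) (psComp A A) := by
  refine ⟨fun h m => ?_, fun h => ext fun n => ?_⟩
  · simpa [coeff_X] using congr(coeff (m + 2) $h).symm
  · match n with
    | 0 => simp [h₀]
    | 1 => simp [h₀, h₁]
    | m + 2 => rw [coeff_succ_X_mul, ← h m]; simp [coeff_X]

end PowerSeries

/-- Padding the known coefficients by zeros makes the recursion well founded and, by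
`coeff_psComp_eq_of_trunc_eq`, does not change its value. -/
noncomputable def leftShiftEigenCoeff (R : Type*) [CommSemiring R] : ℕ → R
  | 0 => 0
  | 1 => 1
  | m + 2 =>
    coeff (m + 1) (psComp (mk fun j => if _ : j < m + 2 then leftShiftEigenCoeff R j else 0)
      (mk fun j => if _ : j < m + 2 then leftShiftEigenCoeff R j else 0))

theorem coeff_add_two_mk_leftShiftEigenCoeff (R : Type*) [CommSemiring R] (m : ℕ) :
    coeff (m + 2) (mk (leftShiftEigenCoeff R)) =
      coeff (m + 1) (psComp (mk (leftShiftEigenCoeff R)) (mk (leftShiftEigenCoeff R))) := by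
  have htrunc : trunc (m + 2) (mk fun j => if _ : j < m + 2 then leftShiftEigenCoeff R j else 0) =
      trunc (m + 2) (mk (leftShiftEigenCoeff R)) :=
    trunc_eq_trunc_iff.mpr fun j hj => by simp [hj]
  rw [coeff_mk, leftShiftEigenCoeff, coeff_psComp_eq_of_trunc_eq htrunc htrunc]

/-- There is a unique formal power series `A(x) = x + a₂x² + ⋯` (i.e. with
`A ≡ x (mod x²)`) satisfying `A(A(x)) = (A(x) - x)/x`, equivalently
`x·A(A(x)) = A(x) - x`. -/
theorem unique_left_shift_eigenseries :
    ∃! A : PowerSeries ℚ,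
      (PowerSeries.constantCoeff A = 0 ∧ PowerSeries.coeff 1 A = 1) ∧
        PowerSeries.X * psComp A A = A - PowerSeries.X := by
  set A := mk (leftShiftEigenCoeff ℚ)
  have hA₀ : constantCoeff A = 0 := by simp [A, leftShiftEigenCoeff]
  have hA₁ : coeff 1 A = 1 := by simp [A, leftShiftEigenCoeff]
  refine ⟨A, ⟨⟨hA₀, hA₁⟩, (X_mul_psComp_self_eq_sub_X_iff hA₀ hA₁).mpr
    (coeff_add_two_mk_leftShiftEigenCoeff ℚ)⟩, ?_⟩
  rintro B ⟨⟨hB₀, hB₁⟩, hB⟩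
  exact eq_of_coeff_add_two_eq_coeff_psComp_self (hB₀.trans hA₀.symm) (hB₁.trans hA₁.symm)
    ((X_mul_psComp_self_eq_sub_X_iff hB₀ hB₁).mp hB) (coeff_add_two_mk_leftShiftEigenCoeff ℚ)
end

section
/- If B(x) = Σ_{n≥1} b_n x^n is the compositional inverse of x/(1+A(x)) where A(x) = Σ_{n≥1} a_n x^n, then b_1 = 1 and for n ≥ 1, b_{n+1} = (1/(n+1)) Σ multinomial(n+1; n+1-Σr_i, r_1, ..., r_n) · a_1^{r_1} a_2^{r_2} ··· a_n^{r_n}, where the sum is over all partitions 1^{r_1} 2^{r_2} ··· n^{r_n} of n (i.e., nonnegative integers r_1,...,r_n with Σ i·r_i = n). -/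
/-- The Lagrange-inversion partition sum
`∑ multinomial(n+1; n+1-∑rᵢ, r₁,…,rₙ) a₁^{r₁} ⋯ aₙ^{rₙ}` over all
`r₁,…,rₙ ≥ 0` with `∑ i·rᵢ = n` (each `rᵢ ≤ n` automatically). -/
noncomputable def pSum (n : ℕ) (a : ℕ → ℚ) : ℚ :=
  ∑ r ∈ Finset.univ.filter
      (fun r : Fin n → Fin (n + 1) => ∑ i, (i.1 + 1) * (r i).1 = n),
    ((Nat.factorial (n + 1) : ℚ) /
        ((Nat.factorial (n + 1 - ∑ i, (r i).1) : ℚ) * ∏ i, (Nat.factorial (r i).1 : ℚ))) *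
      ∏ i, a (i.1 + 1) ^ (r i).1

open PowerSeries Finset

section Coeff

variable {R : Type*} [CommSemiring R]

theorem coeff_mul_eq_of_coeff_eq {f g : R⟦X⟧} {n : ℕ} (h : ∀ m ≤ n, coeff m f = coeff m g)
    (p : R⟦X⟧) : coeff n (f * p) = coeff n (g * p) := by
  rw [coeff_mul, coeff_mul]
  exact sum_congr rfl fun x hx => by rw [h x.1 (HasAntidiagonal.antidiagonal.fst_le hx)]

theorem coeff_pow_eq_of_coeff_eq {f g : R⟦X⟧} {n : ℕ} (h : ∀ m ≤ n, coeff m f = coeff m g)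
    (k : ℕ) : coeff n (f ^ k) = coeff n (g ^ k) := by
  have htrunc : trunc (n + 1) f = trunc (n + 1) g := by
    ext m
    simp only [coeff_trunc]
    split_ifs with hm
    exacts [h m (Nat.lt_succ_iff.mp hm), rfl]
  rw [← coeff_coe_trunc_of_lt n.lt_succ_self, ← trunc_trunc_pow, htrunc, trunc_trunc_pow,
    coeff_coe_trunc_of_lt n.lt_succ_self]

theorem coeff_X_mul_pow_eq_zero_of_lt (u : R⟦X⟧) {N k : ℕ} (hN : N < k) :
    coeff N ((X * u) ^ k) = 0 := by
  rw [mul_pow, coeff_X_pow_mul', if_neg (not_le.mpr hN)]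

end Coeff

section LagrangeInversion

variable {K : Type*} [Field K]

theorem derivative_sum_range_smul_pow (c : ℕ → K) (g : K⟦X⟧) (n : ℕ) :
    d⁄dX K (∑ k ∈ range (n + 1), c k • g ^ k) =
      ∑ j ∈ range n, (c (j + 1) * ((j : K) + 1)) • (g ^ j * d⁄dX K g) := by
  simp only [map_sum, Derivation.map_smul, derivative_pow]
  rw [sum_range_succ']
  simp only [Nat.cast_zero, zero_mul, smul_zero, add_zero]
  refine sum_congr rfl fun j _ => ?_
  rw [Nat.add_sub_cancel, mul_smul, mul_assoc, ← nsmul_eq_mul, ← Nat.cast_smul_eq_nsmul K,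
    Nat.cast_succ]

variable [CharZero K]

theorem coeff_succ_pow_mul_sub_X_mul_derivative (f : K⟦X⟧) (k : ℕ) :
    coeff (k + 1) (f ^ k * (f - X * d⁄dX K f)) = 0 := by
  have hderiv : ((k : K) + 1) * coeff k (f ^ k * d⁄dX K f)
      = ((k : K) + 1) * coeff (k + 1) (f ^ (k + 1)) := by
    have h := coeff_derivative (f ^ (k + 1)) k
    rw [derivative_pow, Nat.add_sub_cancel, mul_assoc, ← map_natCast (C (R := K)),
      coeff_C_mul] at h
    push_cast at h
    rw [h, mul_comm]
  rw [show f ^ k * (f - X * d⁄dX K f) = f ^ (k + 1) - X * (f ^ k * d⁄dX K f) by ring, map_sub,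
    coeff_succ_X_mul, mul_left_cancel₀ (Nat.cast_add_one_ne_zero k) hderiv, sub_self]

variable {φ : K⟦X⟧}

theorem coeff_X_mul_inv_pow_mul_derivative_mul_pow (hφ : constantCoeff φ ≠ 0) {j n : ℕ}
    (hjn : j ≤ n) :
    coeff n ((X * φ⁻¹) ^ j * d⁄dX K (X * φ⁻¹) * φ ^ (n + 1)) = if j = n then 1 else 0 := by
  have hinv : φ * φ⁻¹ = 1 := PowerSeries.mul_inv_cancel φ hφ
  obtain ⟨m, rfl⟩ := Nat.exists_eq_add_of_le hjn
  have hexpand :=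
    calc (X * φ⁻¹) ^ j * d⁄dX K (X * φ⁻¹) * φ ^ (j + m + 1)
        = X ^ j * (φ * φ⁻¹) ^ (j + 1) * (φ ^ m - X * (φ ^ m * φ⁻¹ * d⁄dX K φ)) := by
          rw [Derivation.leibniz, derivative_inv', derivative_X, smul_eq_mul, smul_eq_mul]
          ring
      _ = X ^ j * (φ ^ m * φ⁻¹ * (φ - X * d⁄dX K φ)) := by
          rw [hinv, one_pow, mul_one]
          linear_combination (-X ^ j * φ ^ m) * hinv
  rw [hexpand, coeff_X_pow_mul', if_pos (Nat.le_add_right j m), Nat.add_sub_cancel_left]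
  rcases m with _ | k
  · simp [hφ]
  · rw [if_neg (by omega), pow_succ, mul_assoc (φ ^ k), hinv, mul_one,
      coeff_succ_pow_mul_sub_X_mul_derivative]

theorem lagrange_inversion (hφ : constantCoeff φ ≠ 0) {B : K⟦X⟧} (hB : psComp B (X * φ⁻¹) = X)
    (n : ℕ) : ((n : K) + 1) * coeff (n + 1) B = coeff n (φ ^ (n + 1)) := by
  set g : K⟦X⟧ := X * φ⁻¹
  set P : K⟦X⟧ := ∑ k ∈ range (n + 2), coeff k B • g ^ k
  have hP : ∀ N ≤ n + 1, coeff N P = coeff N X := by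
    intro N hN
    rw [← hB, psComp, coeff_mk, map_sum]
    simp only [coeff_smul, smul_eq_mul]
    refine (sum_subset (range_subset_range.mpr (by omega)) fun k _ hkN => ?_).symm
    rw [coeff_X_mul_pow_eq_zero_of_lt _ (by simpa using hkN), mul_zero]
  have hP' : ∀ M ≤ n, coeff M (d⁄dX K P) = coeff M 1 := by
    intro M hM
    rw [coeff_derivative, hP (M + 1) (by omega), coeff_X, coeff_one]
    rcases M with _ | M <;> simp
  calc ((n : K) + 1) * coeff (n + 1) B
      = ∑ j ∈ range (n + 1), coeff (j + 1) B * ((j : K) + 1) *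
          coeff n (g ^ j * d⁄dX K g * φ ^ (n + 1)) := by
        rw [sum_eq_single_of_mem n (self_mem_range_succ n) fun j hj hjn =>
          by rw [coeff_X_mul_inv_pow_mul_derivative_mul_pow hφ (mem_range_succ_iff.mp hj),
            if_neg hjn, mul_zero],
          coeff_X_mul_inv_pow_mul_derivative_mul_pow hφ le_rfl, if_pos rfl]
        ring
    _ = coeff n (d⁄dX K P * φ ^ (n + 1)) := by
        rw [derivative_sum_range_smul_pow, sum_mul, map_sum]
        simp only [smul_mul_assoc, coeff_smul, smul_eq_mul]
    _ = coeff n (φ ^ (n + 1)) := by rw [coeff_mul_eq_of_coeff_eq hP', one_mul]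

end LagrangeInversion

section Multinomial

variable {R : Type*} [CommSemiring R]

theorem coeff_sum_monomial_pow {ι : Type*} [DecidableEq ι] (s : Finset ι) (c : ι → R)
    (d : ι → ℕ) (m n : ℕ) :
    coeff n ((∑ i ∈ s, monomial (d i) (c i)) ^ m) =
      ∑ k ∈ s.piAntidiag m with ∑ i ∈ s, d i * k i = n,
        (Nat.multinomial s k : R) * ∏ i ∈ s, c i ^ k i := by
  rw [sum_pow_eq_sum_piAntidiag, map_sum, sum_filter]
  refine sum_congr rfl fun k _ => ?_
  simp only [monomial_pow, prod_monomial, ← map_natCast (C (R := R)), coeff_C_mul,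
    coeff_monomial]
  rw [mul_ite, mul_zero]
  refine if_congr ?_ rfl rfl
  rw [eq_comm]
  simp only [mul_comm]

theorem coeff_pow_eq_sum_multinomial (f : R⟦X⟧) (n m : ℕ) :
    coeff n (f ^ m) =
      ∑ k ∈ (univ : Finset (Fin (n + 1))).piAntidiag m with ∑ j : Fin (n + 1), (j : ℕ) * k j = n,
        (Nat.multinomial univ k : R) * ∏ j : Fin (n + 1), coeff j f ^ k j := by
  rw [coeff_pow_eq_of_coeff_eq (g := ∑ j : Fin (n + 1), monomial j (coeff j f)) ?_,
    coeff_sum_monomial_pow]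
  intro i hi
  rw [map_sum, Fin.sum_univ_eq_sum_range (fun j => coeff i (monomial j (coeff j f)))]
  simp [coeff_monomial, Nat.lt_succ_of_le hi]

end Multinomial

theorem Nat.cast_multinomial_univ_cons {n : ℕ} (x : ℕ) (r : Fin n → ℕ) :
    (Nat.multinomial univ (Fin.cons x r : Fin (n + 1) → ℕ) : ℚ) =
      ((x + ∑ i, r i).factorial : ℚ) / ((x.factorial : ℚ) * ∏ i, ((r i).factorial : ℚ)) := by
  have h := Nat.multinomial_spec univ (Fin.cons x r : Fin (n + 1) → ℕ)
  rw [Fin.prod_univ_succ, Fin.sum_univ_succ] at h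
  simp only [Fin.cons_zero, Fin.cons_succ] at h
  rw [eq_div_iff (by positivity), mul_comm]
  exact_mod_cast h

theorem sum_le_sum_succ_mul {n : ℕ} (r : Fin n → ℕ) :
    ∑ i, r i ≤ ∑ i : Fin n, ((i : ℕ) + 1) * r i :=
  sum_le_sum fun i _ => Nat.le_mul_of_pos_left _ (Nat.succ_pos i)

theorem le_of_sum_succ_mul_eq {n : ℕ} {r : Fin n → ℕ}
    (hr : ∑ i : Fin n, ((i : ℕ) + 1) * r i = n) (i : Fin n) : r i ≤ n :=
  (Nat.le_mul_of_pos_left _ (Nat.succ_pos i)).trans <|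
    (single_le_sum (f := fun i : Fin n => ((i : ℕ) + 1) * r i)
      (fun _ _ => Nat.zero_le _) (mem_univ i)).trans_eq hr

theorem mem_filter_piAntidiag_fin_succ_iff {n : ℕ} (k : Fin (n + 1) → ℕ) :
    k ∈ ((univ : Finset (Fin (n + 1))).piAntidiag (n + 1)).filter
        (fun k => ∑ j : Fin (n + 1), (j : ℕ) * k j = n) ↔
      k 0 + ∑ i : Fin n, k i.succ = n + 1 ∧ ∑ i : Fin n, ((i : ℕ) + 1) * k i.succ = n := by
  simp [mem_piAntidiag, Fin.sum_univ_succ]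

theorem pSum_eq_sum_multinomial (w : ℕ → ℚ) (hw : w 0 = 1) (n : ℕ) :
    pSum n w = ∑ k ∈ (univ : Finset (Fin (n + 1))).piAntidiag (n + 1)
        with ∑ j : Fin (n + 1), (j : ℕ) * k j = n,
      (Nat.multinomial univ k : ℚ) * ∏ j : Fin (n + 1), w j ^ k j := by
  have hval {k : Fin (n + 1) → ℕ} (hk : ∑ i : Fin n, ((i : ℕ) + 1) * k i.succ = n) (i : Fin n) :
      (Fin.ofNat (n + 1) (k i.succ) : ℕ) = k i.succ := by
    rw [Fin.val_ofNat, Nat.mod_eq_of_lt (Nat.lt_succ_of_le (le_of_sum_succ_mul_eq hk i))]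
  unfold pSum
  refine sum_nbij' (fun r => Fin.cons (n + 1 - ∑ i, (r i : ℕ)) fun i => (r i : ℕ))
    (fun k i => Fin.ofNat (n + 1) (k i.succ)) ?_ ?_ ?_ ?_ ?_
  · intro r hr
    have hle := sum_le_sum_succ_mul fun i => (r i : ℕ)
    rw [mem_filter] at hr
    rw [mem_filter_piAntidiag_fin_succ_iff]
    simp only [Fin.cons_zero, Fin.cons_succ]
    exact ⟨by omega, hr.2⟩
  · intro k hk
    rw [mem_filter_piAntidiag_fin_succ_iff] at hk
    simp only [mem_filter, mem_univ, true_and, hval hk.2]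
    exact hk.2
  · intro r _
    funext i
    simp only [Fin.cons_succ, Fin.ofNat_val_eq_self]
  · intro k hk
    rw [mem_filter_piAntidiag_fin_succ_iff] at hk
    simp only [hval hk.2]
    funext j
    refine Fin.cases ?_ (fun i => ?_) j
    · simp only [Fin.cons_zero]
      omega
    · simp only [Fin.cons_succ]
  · intro r hr
    have hle := sum_le_sum_succ_mul fun i => (r i : ℕ)
    rw [mem_filter] at hr
    rw [Nat.cast_multinomial_univ_cons, Fin.prod_univ_succ]
    simp only [Fin.cons_zero, Fin.cons_succ, Fin.val_zero, Fin.val_succ, hw, one_pow, one_mul]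
    rw [Nat.sub_add_cancel (by omega)]

theorem pSum_congr {n : ℕ} {a a' : ℕ → ℚ} (h : ∀ i, a (i + 1) = a' (i + 1)) :
    pSum n a = pSum n a' := by
  simp only [pSum, h]

theorem coeff_pow_succ_eq_pSum (f : ℚ⟦X⟧) (hf : constantCoeff f = 1) (n : ℕ) :
    coeff n (f ^ (n + 1)) = pSum n fun j => coeff j f := by
  rw [coeff_pow_eq_sum_multinomial, pSum_eq_sum_multinomial _ (by simpa using hf)]

theorem lagrange_inversion_revertReciprocal_general (a : ℕ → ℚ) (B : PowerSeries ℚ)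
    (A : PowerSeries ℚ) (hA : A = PowerSeries.mk fun n => if n = 0 then 0 else a n)
    (hBl : psComp B (PowerSeries.X * (1 + A)⁻¹) = PowerSeries.X) :
    PowerSeries.coeff 1 B = 1 ∧
      ∀ n : ℕ, 1 ≤ n →
        PowerSeries.coeff (n + 1) B = (1 / (n + 1 : ℚ)) * pSum n a := by
  have hφ : constantCoeff (1 + A) = 1 := by simp [hA, ← coeff_zero_eq_constantCoeff]
  have hcoeff (i : ℕ) : coeff (i + 1) (1 + A) = a (i + 1) := by simp [hA, coeff_one]
  have hB (n : ℕ) : coeff (n + 1) B = 1 / (n + 1 : ℚ) * coeff n ((1 + A) ^ (n + 1)) := by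
    rw [← lagrange_inversion (by simp [hφ]) hBl n]
    field_simp
  refine ⟨by simpa [hφ] using hB 0, fun n _ => ?_⟩
  rw [hB, coeff_pow_succ_eq_pSum _ hφ, pSum_congr hcoeff]

/-- Lagrange inversion: if `B = ∑ bₙxⁿ` is the compositional inverse of
`x/(1+A(x))` where `A = ∑_{n≥1} aₙxⁿ`, then `b₁ = 1` and for `n ≥ 1`,
`b_{n+1} = (1/(n+1)) ∑ multinomial(n+1; n+1-∑rᵢ, r₁,…,rₙ) a₁^{r₁}⋯aₙ^{rₙ}`,
summed over partitions `1^{r₁}⋯n^{rₙ} ⊢ n`. -/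
theorem lagrange_inversion_revertReciprocal (a : ℕ → ℚ) (B : PowerSeries ℚ)
    (A : PowerSeries ℚ) (hA : A = PowerSeries.mk fun n => if n = 0 then 0 else a n)
    (hBl : psComp B (PowerSeries.X * (1 + A)⁻¹) = PowerSeries.X)
    (hBr : psComp (PowerSeries.X * (1 + A)⁻¹) B = PowerSeries.X) :
    PowerSeries.coeff 1 B = 1 ∧
      ∀ n : ℕ, 1 ≤ n →
        PowerSeries.coeff (n + 1) B = (1 / (n + 1 : ℚ)) * pSum n a :=
  lagrange_inversion_revertReciprocal_general a B A hA hBl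
end

section
/- A permutation π of [n] avoids the barred pattern 3-bar5-241 if and only if, in its left-to-right-maxima decomposition π = m_1 L_1 m_2 L_2 ... m_r L_r, (i) every entry of L_i is less than every entry of L_j whenever i < j, and (ii) each L_i (as a permutation pattern) avoids 3-bar5-241. -/
/-- `π` avoids the barred pattern 3̄5241: every occurrence of the classical
pattern 3241 extends to an occurrence of 35241. -/
def AvoidsBarred {n : ℕ} (π : Equiv.Perm (Fin n)) : Prop :=
  ∀ i j k l : Fin n, i < j → j < k → k < l →
    π l < π j → π j < π i → π i < π k →
    ∃ m : Fin n, i < m ∧ m < j ∧ π k < π m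

/-- Position `j` is a left-to-right maximum of `π`. -/
def IsLRMax {n : ℕ} (π : Equiv.Perm (Fin n)) (j : Fin n) : Prop :=
  ∀ i : Fin n, i < j → π i < π j

/-- Characterization of 3̄5241-avoidance via the left-to-right-maxima
decomposition `π = m₁L₁m₂L₂⋯m_rL_r`: (i) entries of earlier blocks are smaller
than entries of later blocks (non-maximum positions separated by a maximum have
increasing values), and (ii) each block `Lᵢ` (a maximal run of non-maximum
positions) avoids 3̄5241 as a pattern. -/
theorem avoidsBarred_iff_LRMax_decomposition {n : ℕ} (π : Equiv.Perm (Fin n)) :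
    AvoidsBarred π ↔
      ((∀ p q : Fin n, ¬ IsLRMax π p → ¬ IsLRMax π q →
          (∃ m : Fin n, IsLRMax π m ∧ p < m ∧ m < q) → π p < π q) ∧
        (∀ p q r s : Fin n, p < q → q < r → r < s →
          ¬ IsLRMax π p → (∀ m : Fin n, p < m → m ≤ s → ¬ IsLRMax π m) →
          π s < π q → π q < π p → π p < π r →
          ∃ m : Fin n, p < m ∧ m < q ∧ π r < π m)) := by
  constructor
  · intro hA
    refine ⟨?_, ?_⟩
    · intro p q hp hq ⟨m, hm, hpm, hmq⟩
      simp only [IsLRMax, not_forall, not_lt] at hp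
      obtain ⟨i, hip, hi⟩ := hp
      have hpi : π p < π i :=
        lt_of_le_of_ne hi (fun h => (ne_of_lt hip) (π.injective h.symm))
      by_contra hpq
      push_neg at hpq
      have hqp : π q < π p :=
        lt_of_le_of_ne hpq (fun h => (ne_of_lt (lt_trans hpm hmq)) (π.injective h.symm))
      obtain ⟨m', _, h2, h3⟩ :=
        hA i p m q hip hpm hmq hqp hpi (hm i (lt_trans hip hpm))
      exact absurd (hm m' (lt_trans h2 hpm)) (not_lt.2 h3.le)
    · intro p q r s h1 h2 h3 _ _ h6 h7 h8
      exact hA p q r s h1 h2 h3 h6 h7 h8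
  · rintro ⟨H1, H2⟩ i j k l hij hjk hkl hlj hji hik
    obtain ⟨t, htS, htmax⟩ :=
      Finset.exists_max_image (Finset.univ.filter (· ≤ l)) π ⟨l, by simp⟩
    have htle : t ≤ l := by simpa using htS
    have hmax : ∀ x : Fin n, x ≤ l → π x ≤ π t := fun x hx => htmax x (by simpa using hx)
    have htLR : IsLRMax π t := fun x hx =>
      lt_of_le_of_ne (hmax x (le_trans hx.le htle))
        (fun h => (ne_of_lt hx) (π.injective h))
    have hkt : π k ≤ π t := hmax k hkl.le
    rcases lt_trichotomy t i with hti | hti | hti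
    · have hinot : ¬ IsLRMax π i := fun h =>
        absurd (h t hti) (not_lt.2 (hmax i (le_trans hij.le (le_trans hjk.le hkl.le))))
      have hnone : ∀ m : Fin n, i < m → m ≤ l → ¬ IsLRMax π m := fun m him hml hLR =>
        absurd (hLR t (lt_trans hti him)) (not_lt.2 (hmax m hml))
      exact H2 i j k l hij hjk hkl hinot hnone hlj hji hik
    · subst hti
      exact absurd (lt_of_lt_of_le hik hkt) (lt_irrefl _)
    · rcases lt_or_ge t j with htj | hjt
      · exact ⟨t, hti, htj,
          lt_of_le_of_ne hkt (fun h => (ne_of_gt (lt_trans htj hjk)) (π.injective h))⟩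
      · have hjt' : j < t := lt_of_le_of_ne hjt (fun h => by
          subst h
          exact absurd (lt_of_lt_of_le (lt_trans hji hik) hkt) (lt_irrefl _))
        have htl : t < l := lt_of_le_of_ne htle (fun h => by
          subst h
          exact absurd (lt_of_lt_of_le (lt_trans hlj (lt_trans hji hik)) hkt) (lt_irrefl _))
        have hjnot : ¬ IsLRMax π j := fun h => absurd (h i hij) (not_lt.2 hji.le)
        have hlnot : ¬ IsLRMax π l := fun h =>
          absurd (h j (lt_trans hjk hkl)) (not_lt.2 hlj.le)
        exact absurd (H1 j l hjnot hlnot ⟨t, htLR, hjt', htl⟩) (not_lt.2 hlj.le)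
end
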